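/- For fixed X ∈ [0,1), the glucose concentration u(X) = cosh(√k X)/cosh(√k) is strictly decreasing as a function of k on (0,∞). -/

import Mathlib

open Real Set

lemma g_anti (X : ℝ) (hX0 : 0 ≤ X) (hX1 : X < 1) :
    StrictAntiOn (fun s : ℝ => Real.cosh (s * X) / Real.cosh s) (Set.Ioi 0) := by
  have hderiv : ∀ s : ℝ, HasDerivAt (fun s : ℝ => Real.cosh (s * X) / Real.cosh s)
      ((X * Real.sinh (s * X) * Real.cosh s - Real.cosh (s * X) * Real.sinh s)
        / (Real.cosh s) ^ 2) s := by
    intro s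
    have h1 : HasDerivAt (fun s : ℝ => Real.cosh (s * X)) (Real.sinh (s * X) * X) s := by
      have := (Real.hasDerivAt_cosh (s * X)).comp s ((hasDerivAt_id s).mul_const X)
      simpa [Function.comp_def] using this
    have h2 : HasDerivAt Real.cosh (Real.sinh s) s := Real.hasDerivAt_cosh s
    have := h1.div h2 (Real.cosh_pos s).ne'
    exact this.congr_deriv (by ring)
  apply strictAntiOn_of_deriv_neg (convex_Ioi 0)
  · exact continuousOn_of_forall_continuousAt fun s _ => (hderiv s).continuousAt
  · intro s hs
    rw [interior_Ioi] at hs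
    have hs0 : (0:ℝ) < s := hs
    rw [(hderiv s).deriv]
    apply div_neg_of_neg_of_pos
    · have h1 : X * Real.sinh (s * X) ≤ Real.sinh (s * X) := by
        nlinarith [(by simpa using Real.sinh_le_sinh.mpr (show (0:ℝ) ≤ s * X by positivity) : 0 ≤ Real.sinh (s*X))]
      have h2 : Real.sinh (s * X) * Real.cosh s - Real.cosh (s * X) * Real.sinh s < 0 := by
        have hlt : Real.sinh (s * X - s) < Real.sinh 0 := by
          apply Real.sinh_lt_sinh.mpr
          nlinarith
        rw [Real.sinh_zero, Real.sinh_sub] at hlt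
        linarith
      nlinarith [Real.cosh_pos s, (by simpa using Real.sinh_le_sinh.mpr (show (0:ℝ) ≤ s * X by positivity) : 0 ≤ Real.sinh (s*X))]
    · positivity

theorem stmt_3 (X : ℝ) (hX : X ∈ Set.Ico (0:ℝ) 1) :
    StrictAntiOn (fun k : ℝ => Real.cosh (Real.sqrt k * X) / Real.cosh (Real.sqrt k))
      (Set.Ioi 0) := by
  obtain ⟨hX0, hX1⟩ := hX
  intro a ha b hb hab
  exact g_anti X hX0 hX1 (Real.sqrt_pos.mpr ha) (Real.sqrt_pos.mpr hb)
    (Real.sqrt_lt_sqrt (le_of_lt ha) hab)
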